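/- More generally, for each n the function φ_n(W) = Σ_{i=1}^n λ_i(E[𝒲(W)²] − J) is convex in the weight vector W ∈ ℝ^E. -/

import Mathlib

/-!
By Ky Fan's maximum principle, the sum of the `n` largest eigenvalues of a symmetric matrix `A`
is the maximum of `∑ i, vᵢᵀ A vᵢ` over orthonormal families `v₁, …, vₙ`, and the maximum is
attained. For a fixed family and `A = E[𝒲²] - J` with `𝒲` symmetric,
`vᵀ A v = E ‖𝒲 v‖² - vᵀ J v`, which is convex in the weights because `𝒲` depends affinely on
them. A pointwise maximum of convex functions that is attained everywhere is convex.
-/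

open Matrix MeasureTheory

/-- The random consensus state matrix: for weights `Wt : ι → ℝ` on the edges of the
supergraph (edge `η` joins nodes `a η` and `b η`), and random link indicators
`L η ω ∈ {0,1}`, `𝒲_ij = Σ_{edges η = {i,j}} Wt η · L η ω` for `i ≠ j`, with
diagonal entries making all row sums equal to `1`. -/
noncomputable def stateMatrix {N : ℕ} {ι : Type*} [Fintype ι] {Ω : Type*}
    (a b : ι → Fin N) (L : ι → Ω → ℝ) (Wt : ι → ℝ) (ω : Ω) :
    Matrix (Fin N) (Fin N) ℝ :=
  Matrix.of fun i j =>
    if i = j then 1 - ∑ η, (if a η = i ∨ b η = i then Wt η * L η ω else 0)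
    else ∑ η, (if (a η = i ∧ b η = j) ∨ (a η = j ∧ b η = i) then Wt η * L η ω else 0)

noncomputable def sumNLargest {N : ℕ} (n : ℕ) (A : Matrix (Fin N) (Fin N) ℝ) : ℝ :=
  if h : A.IsHermitian then
    (((List.ofFn h.eigenvalues).insertionSort (· ≥ ·)).take n).sum
  else 0

open Finset
open scoped RealInnerProductSpace

section ConvexOn

variable {𝕜 E β κ : Type*} [Semiring 𝕜] [PartialOrder 𝕜] [AddCommMonoid E] [AddCommMonoid β]
  [PartialOrder β] [IsOrderedAddMonoid β] [SMul 𝕜 E] [Module 𝕜 β] {s : Set E}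

theorem convexOn_finsetSum {t : Finset κ} {F : κ → E → β} (hs : Convex 𝕜 s)
    (hF : ∀ k ∈ t, ConvexOn 𝕜 s (F k)) : ConvexOn 𝕜 s fun x => ∑ k ∈ t, F k x := by
  simpa only [← Finset.sum_apply] using
    Finset.sum_induction F (ConvexOn 𝕜 s) (fun _ _ => ConvexOn.add) (convexOn_const 0 hs) hF

theorem convexOn_of_forall_le_of_exists_eq [PosSMulMono 𝕜 β] {F : κ → E → β} {f : E → β}
    (hs : Convex 𝕜 s) (hF : ∀ k, ConvexOn 𝕜 s (F k)) (hle : ∀ k, ∀ x ∈ s, F k x ≤ f x)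
    (hex : ∀ x ∈ s, ∃ k, F k x = f x) : ConvexOn 𝕜 s f := by
  refine ⟨hs, fun x hx y hy a b ha hb hab => ?_⟩
  obtain ⟨k, hk⟩ := hex _ (hs hx hy ha hb hab)
  calc f (a • x + b • y) = F k (a • x + b • y) := hk.symm
    _ ≤ a • F k x + b • F k y := (hF k).2 hx hy ha hb hab
    _ ≤ a • f x + b • f y := add_le_add (smul_le_smul_of_nonneg_left (hle k x hx) ha)
        (smul_le_smul_of_nonneg_left (hle k y hy) hb)

end ConvexOn

theorem convexOn_dotProduct_self {m : Type*} [Fintype m] :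
    ConvexOn ℝ Set.univ fun x : m → ℝ => x ⬝ᵥ x := by
  simp only [dotProduct, ← sq]
  exact convexOn_finsetSum convex_univ fun i _ =>
    (even_two.convexOn_pow (𝕜 := ℝ)).comp_linearMap
      (LinearMap.proj (R := ℝ) (φ := fun _ : m => ℝ) i)

section Integral

variable {Ω : Type*} [MeasurableSpace Ω] {μ : Measure Ω}

theorem convexOn_integral {E : Type*} [AddCommMonoid E] [SMul ℝ E] {s : Set E}
    (hs : Convex ℝ s) {g : E → Ω → ℝ} (hg : ∀ ω, ConvexOn ℝ s (g · ω))
    (hint : ∀ x ∈ s, Integrable (g x) μ) : ConvexOn ℝ s fun x => ∫ ω, g x ω ∂μ := by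
  refine ⟨hs, fun x hx y hy a b ha hb hab => ?_⟩
  calc ∫ ω, g (a • x + b • y) ω ∂μ
      ≤ ∫ ω, a * g x ω + b * g y ω ∂μ :=
        integral_mono (hint _ (hs hx hy ha hb hab))
          (((hint x hx).const_mul a).add ((hint y hy).const_mul b))
          fun ω => (hg ω).2 hx hy ha hb hab
    _ = a • ∫ ω, g x ω ∂μ + b • ∫ ω, g y ω ∂μ := by
        rw [integral_add ((hint x hx).const_mul a) ((hint y hy).const_mul b),
          integral_const_mul, integral_const_mul, smul_eq_mul, smul_eq_mul]

variable {m : Type*} [Fintype m]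

theorem integrable_dotProduct_mulVec {X : Ω → Matrix m m ℝ}
    (hX : ∀ i j, Integrable (fun ω => X ω i j) μ) (x : m → ℝ) :
    Integrable (fun ω => x ⬝ᵥ X ω *ᵥ x) μ := by
  simp only [dotProduct, mulVec]
  exact integrable_finsetSum _ fun i _ => (integrable_finsetSum _ fun j _ =>
    (hX i j).mul_const _).const_mul _

theorem dotProduct_mulVec_integral {X : Ω → Matrix m m ℝ}
    (hX : ∀ i j, Integrable (fun ω => X ω i j) μ) (x : m → ℝ) :
    x ⬝ᵥ (of fun i j => ∫ ω, X ω i j ∂μ) *ᵥ x = ∫ ω, x ⬝ᵥ X ω *ᵥ x ∂μ := by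
  simp only [dotProduct, mulVec, of_apply]
  rw [integral_finsetSum _ fun i _ => (integrable_finsetSum _ fun j _ =>
    (hX i j).mul_const _).const_mul _]
  refine sum_congr rfl fun i _ => ?_
  rw [integral_const_mul, integral_finsetSum _ fun j _ => (hX i j).mul_const _]
  simp only [integral_mul_const]

end Integral

theorem Matrix.IsHermitian.dotProduct_mulVec_eq_sum_eigenvalues {m : Type*} [Fintype m]
    [DecidableEq m] {A : Matrix m m ℝ} (hA : A.IsHermitian) (x : EuclideanSpace ℝ m) :
    x.ofLp ⬝ᵥ A *ᵥ x.ofLp = ∑ j, hA.eigenvalues j * ⟪hA.eigenvectorBasis j, x⟫ ^ 2 := by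
  set b := hA.eigenvectorBasis
  have hx : x.ofLp = ∑ j, ⟪b j, x⟫ • (b j).ofLp := by
    conv_lhs => rw [← b.sum_repr' x]
    simp
  have hAb (j : m) : A *ᵥ (b j).ofLp = hA.eigenvalues j • (b j).ofLp :=
    hA.mulVec_eigenvectorBasis j
  have hinner (j : m) : x.ofLp ⬝ᵥ (b j).ofLp = ⟪b j, x⟫ := by
    simp [EuclideanSpace.inner_eq_star_dotProduct]
  nth_rewrite 2 [hx]
  simp only [mulVec_sum, mulVec_smul, hAb, dotProduct_sum, dotProduct_smul, hinner, smul_eq_mul]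
  exact sum_congr rfl fun j _ => by ring

theorem sum_mul_le_sum_filter_val_lt_of_antitone {N n : ℕ} (hn1 : 1 ≤ n) (hnN : n ≤ N)
    {g d : Fin N → ℝ} (hg : Antitone g) (hd0 : ∀ j, 0 ≤ d j) (hd1 : ∀ j, d j ≤ 1)
    (hd : ∑ j, d j = n) :
    ∑ j, g j * d j ≤ ∑ j : Fin N with j.val < n, g j := by
  -- `c` separates the first `n` values of `g` from the others, so termwise
  -- `(g j - c) * (𝟙[j < n] - d j) ≥ 0`
  set c := g ⟨n - 1, by omega⟩
  have key (j : Fin N) :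
      g j * d j ≤ (if j.val < n then g j else 0) + c * (d j - if j.val < n then 1 else 0) := by
    split_ifs with hj
    · have hcj : c ≤ g j := hg (Fin.mk_le_mk.2 (by omega))
      nlinarith [hd1 j]
    · have hjc : g j ≤ c := hg (Fin.mk_le_mk.2 (by omega))
      nlinarith [hd0 j]
  calc ∑ j, g j * d j
      ≤ ∑ j : Fin N, ((if j.val < n then g j else 0) + c * (d j - if j.val < n then 1 else 0)) :=
        sum_le_sum fun j _ => key j
    _ = ∑ j : Fin N with j.val < n, g j := by
        rw [sum_add_distrib, ← mul_sum, sum_sub_distrib, hd, ← sum_filter, sum_boole,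
          Fin.card_filter_val_lt, min_eq_right hnN, sub_self, mul_zero, add_zero]

theorem exists_perm_antitone_sumNLargest_eq {N : ℕ} {A : Matrix (Fin N) (Fin N) ℝ}
    (hA : A.IsHermitian) (n : ℕ) :
    ∃ σ : Equiv.Perm (Fin N), Antitone (hA.eigenvalues ∘ σ) ∧
      sumNLargest n A = ∑ j : Fin N with j.val < n, hA.eigenvalues (σ j) := by
  set σ := Fin.revPerm.trans (Tuple.sort hA.eigenvalues)
  have hσ : Antitone (hA.eigenvalues ∘ σ) := fun i j hij =>
    Tuple.monotone_sort hA.eigenvalues (Fin.rev_le_rev.mpr hij)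
  refine ⟨σ, hσ, ?_⟩
  have hsort :
      (List.ofFn hA.eigenvalues).insertionSort (· ≥ ·) = List.ofFn (hA.eigenvalues ∘ σ) :=
    List.Perm.eq_of_pairwise' (List.pairwise_insertionSort _ _)
      (List.pairwise_ofFn.2 fun _ _ hij => hσ hij.le)
      ((List.perm_insertionSort _ _).trans (Equiv.Perm.ofFn_comp_perm σ _).symm)
  rw [sumNLargest, dif_pos hA, hsort, List.sum_take_ofFn]
  rfl

theorem sum_dotProduct_mulVec_le_sumNLargest {N n : ℕ} (hn1 : 1 ≤ n) (hnN : n ≤ N)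
    {A : Matrix (Fin N) (Fin N) ℝ} (hA : A.IsHermitian) {v : Fin n → EuclideanSpace ℝ (Fin N)}
    (hv : Orthonormal ℝ v) :
    ∑ i, (v i).ofLp ⬝ᵥ A *ᵥ (v i).ofLp ≤ sumNLargest n A := by
  set b := hA.eigenvectorBasis
  -- the weight of the eigenvector `b j` in the family `v`: at most `1` by Bessel's inequality,
  -- and of total mass `n` by Parseval's identity
  set d : Fin N → ℝ := fun j => ∑ i, ⟪b j, v i⟫ ^ 2
  have hd0 (j : Fin N) : 0 ≤ d j := sum_nonneg fun i _ => sq_nonneg _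
  have hd1 (j : Fin N) : d j ≤ 1 := by
    simpa [d, real_inner_comm] using hv.sum_inner_products_le (b j) (s := univ)
  have hd : ∑ j, d j = n := by
    simp only [d]
    rw [sum_comm]
    simp [b.sum_sq_inner_right, hv.1]
  obtain ⟨σ, hσ, hsum⟩ := exists_perm_antitone_sumNLargest_eq hA n
  calc ∑ i, (v i).ofLp ⬝ᵥ A *ᵥ (v i).ofLp
      = ∑ j, hA.eigenvalues j * d j := by
        simp only [hA.dotProduct_mulVec_eq_sum_eigenvalues, d, mul_sum]
        exact sum_comm
    _ = ∑ j, hA.eigenvalues (σ j) * d (σ j) := (Equiv.sum_comp σ _).symm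
    _ ≤ sumNLargest n A := hsum ▸ sum_mul_le_sum_filter_val_lt_of_antitone hn1 hnN hσ
          (fun j => hd0 _) (fun j => hd1 _) (by rw [Equiv.sum_comp]; exact hd)

theorem exists_orthonormal_sum_dotProduct_mulVec_eq_sumNLargest {N n : ℕ} (hnN : n ≤ N)
    {A : Matrix (Fin N) (Fin N) ℝ} (hA : A.IsHermitian) :
    ∃ v : Fin n → EuclideanSpace ℝ (Fin N), Orthonormal ℝ v ∧
      ∑ i, (v i).ofLp ⬝ᵥ A *ᵥ (v i).ofLp = sumNLargest n A := by
  obtain ⟨σ, -, hsum⟩ := exists_perm_antitone_sumNLargest_eq hA n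
  set b := hA.eigenvectorBasis
  have hb (j : Fin N) : (b j).ofLp ⬝ᵥ A *ᵥ (b j).ofLp = hA.eigenvalues j := by
    simpa [dotProduct_comm] using (hA.eigenvalues_eq j).symm
  refine ⟨fun i => b (σ (Fin.castLE hnN i)),
    b.orthonormal.comp _ (σ.injective.comp (Fin.castLE_injective hnN)), ?_⟩
  simp only [hb, hsum]
  exact (sum_bij (fun j hj => ⟨j, (mem_filter.1 hj).2⟩) (by simp)
    (fun _ _ _ _ h => by simpa [Fin.ext_iff] using h) (fun i _ => ⟨Fin.castLE hnN i, by simp⟩)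
    (fun _ _ => rfl)).symm

section SecondMoment

variable {N : ℕ} {Ω : Type*} [MeasurableSpace Ω] {μ : Measure Ω} {E : Type*}
  [AddCommMonoid E] [SMul ℝ E] {M : E → Ω → Matrix (Fin N) (Fin N) ℝ}

theorem convexOn_dotProduct_mulVec_integral_mul_self
    (hM_affine : ∀ ω W₁ W₂ (p q : ℝ), 0 ≤ p → 0 ≤ q → p + q = 1 →
      M (p • W₁ + q • W₂) ω = p • M W₁ ω + q • M W₂ ω)
    (hM_symm : ∀ W ω, (M W ω).IsSymm)
    (hM_int : ∀ W i j, Integrable (fun ω => (M W ω * M W ω) i j) μ) (x : Fin N → ℝ) :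
    ConvexOn ℝ Set.univ fun W => x ⬝ᵥ (of fun i j => ∫ ω, (M W ω * M W ω) i j ∂μ) *ᵥ x := by
  have hquad (W : E) (ω : Ω) :
      x ⬝ᵥ (M W ω * M W ω) *ᵥ x = (M W ω *ᵥ x) ⬝ᵥ (M W ω *ᵥ x) := by
    nth_rewrite 1 [← (hM_symm W ω).eq]
    rw [← mulVec_mulVec, dotProduct_transpose_mulVec]
  simp only [dotProduct_mulVec_integral (hM_int _) x, hquad]
  refine convexOn_integral convex_univ
    (fun ω => ⟨convex_univ, fun W₁ _ W₂ _ p q hp hq hpq => ?_⟩) fun W _ => ?_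
  · dsimp only
    rw [hM_affine ω W₁ W₂ p q hp hq hpq, add_mulVec, smul_mulVec, smul_mulVec]
    exact convexOn_dotProduct_self.2 trivial trivial hp hq hpq
  · simpa only [hquad] using integrable_dotProduct_mulVec (hM_int W) x

theorem convexOn_sumNLargest_integral_mul_self_sub {n : ℕ} (hn1 : 1 ≤ n) (hnN : n ≤ N)
    (hM_affine : ∀ ω W₁ W₂ (p q : ℝ), 0 ≤ p → 0 ≤ q → p + q = 1 →
      M (p • W₁ + q • W₂) ω = p • M W₁ ω + q • M W₂ ω)
    (hM_symm : ∀ W ω, (M W ω).IsSymm)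
    (hM_int : ∀ W i j, Integrable (fun ω => (M W ω * M W ω) i j) μ)
    {J : Matrix (Fin N) (Fin N) ℝ} (hJ : J.IsSymm) :
    ConvexOn ℝ Set.univ fun W =>
      sumNLargest n ((of fun i j => ∫ ω, (M W ω * M W ω) i j ∂μ) - J) := by
  set A : E → Matrix (Fin N) (Fin N) ℝ :=
    fun W => (of fun i j => ∫ ω, (M W ω * M W ω) i j ∂μ) - J
  have hA (W : E) : (A W).IsHermitian := by
    have hsq (ω : Ω) : (M W ω * M W ω).IsSymm := by
      simpa only [(hM_symm W ω).eq] using isSymm_mul_transpose_self (M W ω)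
    refine isHermitian_iff_isSymm.2 (IsSymm.sub (IsSymm.ext fun i j => ?_) hJ)
    simp only [of_apply, (hsq _).apply]
  refine convexOn_of_forall_le_of_exists_eq
    (F := fun (v : {v : Fin n → EuclideanSpace ℝ (Fin N) // Orthonormal ℝ v}) W =>
      ∑ i, (v.1 i).ofLp ⬝ᵥ A W *ᵥ (v.1 i).ofLp)
    convex_univ (fun v => ?_)
    (fun v W _ => sum_dotProduct_mulVec_le_sumNLargest hn1 hnN (hA W) v.2) fun W _ => ?_
  · refine convexOn_finsetSum convex_univ fun i _ => ?_
    simp only [A, sub_mulVec, dotProduct_sub]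
    exact (convexOn_dotProduct_mulVec_integral_mul_self hM_affine hM_symm hM_int _).sub
      (concaveOn_const _ convex_univ)
  · obtain ⟨v, hv, hsum⟩ := exists_orthonormal_sum_dotProduct_mulVec_eq_sumNLargest hnN (hA W)
    exact ⟨⟨v, hv⟩, hsum⟩

end SecondMoment

section StateMatrix

variable {N : ℕ} {ι : Type*} [Fintype ι] {Ω : Type*} {a b : ι → Fin N} {L : ι → Ω → ℝ}

theorem isSymm_stateMatrix (W : ι → ℝ) (ω : Ω) : (stateMatrix a b L W ω).IsSymm := by
  ext i j
  simp only [transpose_apply, stateMatrix, of_apply]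
  rcases eq_or_ne i j with rfl | h
  · rfl
  · simp only [if_neg h, if_neg h.symm, or_comm]

theorem stateMatrix_add_smul {p q : ℝ} (hpq : p + q = 1) (W₁ W₂ : ι → ℝ) (ω : Ω) :
    stateMatrix a b L (p • W₁ + q • W₂) ω
      = p • stateMatrix a b L W₁ ω + q • stateMatrix a b L W₂ ω := by
  have hsum (P : ι → Prop) [DecidablePred P] :
      ∑ η, (if P η then (p • W₁ + q • W₂) η * L η ω else 0)
        = p * ∑ η, (if P η then W₁ η * L η ω else 0)
          + q * ∑ η, (if P η then W₂ η * L η ω else 0) := by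
    rw [mul_sum, mul_sum, ← sum_add_distrib]
    refine sum_congr rfl fun η _ => ?_
    split_ifs
    · simp only [Pi.add_apply, Pi.smul_apply, smul_eq_mul]; ring
    · ring
  ext i j
  simp only [stateMatrix, of_apply, Matrix.add_apply, Matrix.smul_apply, smul_eq_mul]
  split_ifs
  · rw [hsum]; linear_combination -hpq
  · rw [hsum]

theorem abs_stateMatrix_apply_le (hL : ∀ η ω, |L η ω| ≤ 1) (W : ι → ℝ) (ω : Ω) (i j : Fin N) :
    |stateMatrix a b L W ω i j| ≤ 1 + ∑ η, |W η| := by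
  have hsum (P : ι → Prop) [DecidablePred P] :
      |∑ η, (if P η then W η * L η ω else 0)| ≤ ∑ η, |W η| := by
    refine (abs_sum_le_sum_abs _ _).trans (sum_le_sum fun η _ => ?_)
    split_ifs
    · rw [abs_mul]; exact mul_le_of_le_one_right (abs_nonneg _) (hL η ω)
    · simp
  have hW : 0 ≤ ∑ η, |W η| := sum_nonneg fun η _ => abs_nonneg _
  simp only [stateMatrix, of_apply]
  split_ifs
  · exact (abs_sub _ _).trans (by rw [abs_one]; linarith [hsum fun η => a η = i ∨ b η = i])
  · linarith [hsum fun η => (a η = i ∧ b η = j) ∨ (a η = j ∧ b η = i)]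

theorem measurable_stateMatrix_apply [MeasurableSpace Ω] (hL : ∀ η, Measurable (L η))
    (W : ι → ℝ) (i j : Fin N) : Measurable fun ω => stateMatrix a b L W ω i j := by
  simp only [stateMatrix, of_apply]
  have hterm (P : Prop) [Decidable P] (η : ι) :
      Measurable fun ω => if P then W η * L η ω else 0 := by
    split_ifs
    · exact (hL η).const_mul _
    · exact measurable_const
  split_ifs
  · exact measurable_const.sub (Finset.measurable_sum _ fun η _ => hterm _ η)
  · exact Finset.measurable_sum _ fun η _ => hterm _ η

theorem integrable_stateMatrix_mul_self_apply [MeasurableSpace Ω] {μ : Measure Ω}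
    [IsFiniteMeasure μ] (hLmeas : ∀ η, Measurable (L η)) (hL : ∀ η ω, |L η ω| ≤ 1)
    (W : ι → ℝ) (i j : Fin N) :
    Integrable (fun ω => (stateMatrix a b L W ω * stateMatrix a b L W ω) i j) μ := by
  have hmeas (i j : Fin N) : AEStronglyMeasurable (fun ω => stateMatrix a b L W ω i j) μ :=
    (measurable_stateMatrix_apply hLmeas W i j).aestronglyMeasurable
  have hbound (i j : Fin N) : ∀ᵐ ω ∂μ, ‖stateMatrix a b L W ω i j‖ ≤ 1 + ∑ η, |W η| :=
    ae_of_all _ fun ω => abs_stateMatrix_apply_le hL W ω i j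
  simp only [Matrix.mul_apply]
  exact integrable_finsetSum _ fun k _ =>
    (Integrable.of_bound (hmeas k j) _ (hbound k j)).bdd_mul (hmeas i k) (hbound i k)

end StateMatrix

theorem phi_n_convex_general (N : ℕ) (n : ℕ) (hn1 : 1 ≤ n) (hnN : n ≤ N) {ι : Type*} [Fintype ι]
    {Ω : Type*} [MeasurableSpace Ω] (μ : MeasureTheory.Measure Ω)
    [IsProbabilityMeasure μ]
    (a b : ι → Fin N)
    (L : ι → Ω → ℝ) (hLmeas : ∀ η, Measurable (L η))
    (hL01 : ∀ η ω, L η ω = 0 ∨ L η ω = 1)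
    (J : Matrix (Fin N) (Fin N) ℝ) (hJ : J = Matrix.of fun _ _ => (1 : ℝ) / N) :
    ConvexOn ℝ Set.univ (fun Wt : ι → ℝ =>
      sumNLargest n ((Matrix.of fun i j =>
        ∫ ω, (stateMatrix a b L Wt ω * stateMatrix a b L Wt ω) i j ∂μ) - J)) := by
  have hL (η : ι) (ω : Ω) : |L η ω| ≤ 1 := by rcases hL01 η ω with h | h <;> simp [h]
  have hJ_symm : J.IsSymm := IsSymm.ext fun i j => by simp [hJ]
  exact convexOn_sumNLargest_integral_mul_self_sub hn1 hnN
    (fun ω W₁ W₂ p q _ _ hpq => stateMatrix_add_smul hpq W₁ W₂ ω)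
    (fun W ω => isSymm_stateMatrix W ω) (integrable_stateMatrix_mul_self_apply hLmeas hL) hJ_symm

/-- For each `n`, the map `φ_n : W ↦ Σ_{i=1}^n λ_i(E[𝒲(W)²] - J)` is convex in the weight vector. -/
theorem phi_n_convex (N : ℕ) (hN : 0 < N) (n : ℕ) (hn1 : 1 ≤ n) (hnN : n ≤ N) {ι : Type*} [Fintype ι]
    {Ω : Type*} [MeasurableSpace Ω] (μ : MeasureTheory.Measure Ω)
    [IsProbabilityMeasure μ]
    (a b : ι → Fin N) (hab : ∀ η, a η ≠ b η)
    (L : ι → Ω → ℝ) (hLmeas : ∀ η, Measurable (L η))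
    (hL01 : ∀ η ω, L η ω = 0 ∨ L η ω = 1)
    (J : Matrix (Fin N) (Fin N) ℝ) (hJ : J = Matrix.of fun _ _ => (1 : ℝ) / N) :
    ConvexOn ℝ Set.univ (fun Wt : ι → ℝ =>
      sumNLargest n ((Matrix.of fun i j =>
        ∫ ω, (stateMatrix a b L Wt ω * stateMatrix a b L Wt ω) i j ∂μ) - J)) :=
  phi_n_convex_general N n hn1 hnN μ a b L hLmeas hL01 J hJ
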